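/- Let L ≥ 2 and let t ≥ 1 be an odd integer. Then Σ_{k ∈ (ℤ/L)², k ≠ 0} 1/(1 − λ_k^t) ≤ 8 · Σ_{l=1}^{⌊L/2⌋} l/(1 − exp(−4 l² t / L²)). -/

import Mathlib

/-!
Represent residues by `ZMod.valMinAbs ∈ (-L/2, L/2]` and let `m = max(|k_x|, |k_y|)`. Jordan's
inequality `cos x ≤ 1 - 2x²/π²` on `[-π, π]` gives `λ_k ≤ 1 - 4m²/L² ≤ exp(-4m²/L²)`, and for odd
`t` this survives raising to the `t`-th power even when `λ_k < 0`. So each term is at most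
`1/(1 - exp(-4m²t/L²))`, and grouping the `k ≠ 0` by `m` finishes the proof, since the shell
`max(|k_x|, |k_y|) = m` of `ℤ²` has `(2m+1)² - (2m-1)² = 8m` points.
-/

/-- The normalized adjacency matrix of the `L×L` torus graph on `(ℤ/L)²`:
`A(u,v)` is the number of the four unit coordinate steps leading from `u` to `v`,
divided by `4`. -/
noncomputable def torusAdj (L : ℕ) : Matrix (ZMod L × ZMod L) (ZMod L × ZMod L) ℝ :=
  Matrix.of fun u v =>
    ((if u + (1, 0) = v then (1 : ℝ) else 0) + (if u + (-1, 0) = v then 1 else 0) +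
      (if u + (0, 1) = v then 1 else 0) + (if u + (0, -1) = v then 1 else 0)) / 4

/-- The eigenvalue `λ_k = (cos(2π k_x/L) + cos(2π k_y/L))/2` of the torus adjacency matrix,
well-defined on residues since cosine is `2π`-periodic. -/
noncomputable def torusEig (L : ℕ) (k : ZMod L × ZMod L) : ℝ :=
  (Real.cos (2 * Real.pi * k.1.val / L) + Real.cos (2 * Real.pi * k.2.val / L)) / 2

open Finset Real

lemma Odd.pow_le_exp_neg_mul {x c : ℝ} {t : ℕ} (ht : Odd t) (hx : x ≤ 1 - c) :
    x ^ t ≤ exp (-(c * t)) := by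
  rcases le_or_gt x 0 with hx₀ | hx₀
  · exact (ht.pow_nonpos hx₀).trans (exp_pos _).le
  · calc x ^ t ≤ exp (-c) ^ t := by gcongr; linarith [add_one_le_exp (-c)]
      _ = exp (-(c * t)) := by rw [← exp_nat_mul, mul_neg, mul_comm]

lemma Finset.sum_comp_le_sum_mul_of_card_fiber_le {ι κ : Type*} [DecidableEq κ]
    {s : Finset ι} {t : Finset κ} {f : ι → κ} {g : κ → ℝ} {c : κ → ℕ}
    (hf : ∀ i ∈ s, f i ∈ t) (hc : ∀ j ∈ t, #{i ∈ s | f i = j} ≤ c j) (hg : ∀ j ∈ t, 0 ≤ g j) :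
    ∑ i ∈ s, g (f i) ≤ ∑ j ∈ t, c j * g j := by
  rw [← sum_fiberwise_of_maps_to hf]
  refine sum_le_sum fun j hj => ?_
  rw [sum_congr rfl fun i hi => by rw [(mem_filter.mp hi).2], sum_const, nsmul_eq_mul]
  gcongr
  · exact hg j hj
  · exact hc j hj

lemma Int.card_Icc_prod_sdiff (l : ℕ) (hl : 1 ≤ l) :
    #((Icc (-l : ℤ) l ×ˢ Icc (-l : ℤ) l) \ (Icc (1 - l : ℤ) (l - 1) ×ˢ Icc (1 - l : ℤ) (l - 1)))
      = 8 * l := by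
  rw [card_sdiff_of_subset (product_subset_product (Icc_subset_Icc (by omega) (by omega))
    (Icc_subset_Icc (by omega) (by omega))), card_product, card_product, Int.card_Icc,
    Int.card_Icc]
  obtain ⟨m, rfl⟩ := Nat.exists_eq_add_of_le' hl
  rw [show (↑(m + 1) + 1 - -↑(m + 1) : ℤ).toNat = 2 * m + 3 by omega,
    show (↑(m + 1) - 1 + 1 - (1 - ↑(m + 1)) : ℤ).toNat = 2 * m + 1 by omega]
  exact Nat.sub_eq_of_eq_add (by ring)

namespace ZMod

variable {n : ℕ} [NeZero n]

lemma cos_two_pi_mul_val_div_eq (a : ZMod n) :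
    cos (2 * π * a.val / n) = cos (2 * π * a.valMinAbs / n) := by
  rw [valMinAbs_def_pos]
  split_ifs
  · norm_cast
  · have hn : (n : ℝ) ≠ 0 := NeZero.ne _
    push_cast
    rw [mul_sub, sub_div, mul_div_cancel_right₀ _ hn, cos_sub_two_pi]

lemma cos_two_pi_mul_val_div_le (a : ZMod n) :
    cos (2 * π * a.val / n) ≤ 1 - 8 * (a.valMinAbs : ℝ) ^ 2 / (n : ℝ) ^ 2 := by
  have hn : (0 : ℝ) < n := by exact_mod_cast Nat.pos_of_ne_zero (NeZero.ne n)
  have habs : |(a.valMinAbs : ℝ)| * 2 ≤ n := by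
    have := natAbs_valMinAbs_le a
    rw [← Int.cast_abs, Int.abs_eq_natAbs, Int.cast_natCast]
    exact_mod_cast (Nat.le_div_iff_mul_le two_pos).mp this
  rw [cos_two_pi_mul_val_div_eq]
  refine (cos_le_one_sub_mul_cos_sq ?_).trans_eq ?_
  · rw [abs_div, abs_mul, abs_of_pos two_pi_pos, abs_of_pos hn, div_le_iff₀ hn]
    nlinarith [pi_pos]
  · field_simp
    ring

end ZMod

def torusSupNorm (L : ℕ) (k : ZMod L × ZMod L) : ℕ :=
  max k.1.valMinAbs.natAbs k.2.valMinAbs.natAbs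

section TorusSupNorm

variable {L : ℕ}

lemma torusSupNorm_sq_le (k : ZMod L × ZMod L) :
    (torusSupNorm L k : ℝ) ^ 2 ≤ (k.1.valMinAbs : ℝ) ^ 2 + (k.2.valMinAbs : ℝ) ^ 2 := by
  have : (torusSupNorm L k : ℤ) ^ 2 ≤ k.1.valMinAbs ^ 2 + k.2.valMinAbs ^ 2 := by
    rw [← Int.natAbs_sq k.1.valMinAbs, ← Int.natAbs_sq k.2.valMinAbs, torusSupNorm, Nat.cast_max]
    rcases max_choice (k.1.valMinAbs.natAbs : ℤ) k.2.valMinAbs.natAbs with h | h <;> rw [h] <;>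
      nlinarith
  exact_mod_cast this

lemma one_le_torusSupNorm {k : ZMod L × ZMod L} (hk : k ≠ 0) : 1 ≤ torusSupNorm L k := by
  have : k.1.valMinAbs ≠ 0 ∨ k.2.valMinAbs ≠ 0 := by
    simpa only [ne_eq, ZMod.valMinAbs_eq_zero, ← not_and_or, Prod.ext_iff, Prod.fst_zero,
      Prod.snd_zero] using hk
  rw [torusSupNorm]
  omega

variable [NeZero L]

lemma torusSupNorm_le (k : ZMod L × ZMod L) : torusSupNorm L k ≤ L / 2 :=
  max_le (ZMod.natAbs_valMinAbs_le _) (ZMod.natAbs_valMinAbs_le _)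

lemma card_torusSupNorm_eq_le (l : ℕ) (hl : 1 ≤ l) :
    #{k : ZMod L × ZMod L | torusSupNorm L k = l} ≤ 8 * l := by
  rw [← Int.card_Icc_prod_sdiff l hl]
  refine card_le_card_of_injOn (fun k => (k.1.valMinAbs, k.2.valMinAbs)) ?_ ?_
  · intro k hk
    rw [mem_coe, mem_filter_univ, torusSupNorm] at hk
    simp only [coe_sdiff, coe_product, coe_Icc, Set.mem_sdiff, Set.mem_prod, Set.mem_Icc]
    omega
  · intro k _ k' _ h
    simp only [Prod.mk.injEq, ZMod.valMinAbs_inj] at h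
    exact Prod.ext h.1 h.2

lemma torusEig_le (k : ZMod L × ZMod L) :
    torusEig L k ≤ 1 - 4 * (torusSupNorm L k : ℝ) ^ 2 / (L : ℝ) ^ 2 := by
  have hL : (0 : ℝ) < (L : ℝ) ^ 2 := by have := NeZero.ne L; positivity
  have h₁ := k.1.cos_two_pi_mul_val_div_le
  have h₂ := k.2.cos_two_pi_mul_val_div_le
  have h := div_le_div_of_nonneg_right (torusSupNorm_sq_le k) hL.le
  rw [add_div] at h
  rw [torusEig]
  simp only [mul_div_assoc] at *
  linarith

lemma one_sub_exp_neg_four_mul_sq_mul_div_sq_pos {l t : ℕ} (hl : 0 < l) (ht : 0 < t) :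
    0 < 1 - exp (-4 * (l : ℝ) ^ 2 * t / (L : ℝ) ^ 2) := by
  have := NeZero.ne L
  rw [sub_pos, exp_lt_one_iff, neg_mul, neg_mul, neg_div, neg_lt_zero]
  positivity

lemma one_div_one_sub_torusEig_pow_le {k : ZMod L × ZMod L} (hk : k ≠ 0) {t : ℕ} (ht : Odd t) :
    1 / (1 - torusEig L k ^ t) ≤
      1 / (1 - exp (-4 * (torusSupNorm L k : ℝ) ^ 2 * t / (L : ℝ) ^ 2)) := by
  have hpow : torusEig L k ^ t ≤ exp (-4 * (torusSupNorm L k : ℝ) ^ 2 * t / (L : ℝ) ^ 2) := by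
    convert ht.pow_le_exp_neg_mul (torusEig_le k) using 2
    ring
  refine one_div_le_one_div_of_le ?_ (by linarith)
  exact one_sub_exp_neg_four_mul_sq_mul_div_sq_pos (one_le_torusSupNorm hk) ht.pos

end TorusSupNorm

theorem torus_sum_inv_one_sub_pow_upper_bound_general
    (L : ℕ) [NeZero L] (t : ℕ) (hodd : Odd t) :
    ∑ k ∈ Finset.univ.filter (fun k : ZMod L × ZMod L => k ≠ 0),
        1 / (1 - torusEig L k ^ t) ≤
      8 * ∑ l ∈ Finset.Icc 1 (L / 2),
        (l : ℝ) / (1 - Real.exp (-4 * (l : ℝ) ^ 2 * t / (L : ℝ) ^ 2)) := by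
  set g : ℕ → ℝ := fun l => 1 / (1 - exp (-4 * (l : ℝ) ^ 2 * t / (L : ℝ) ^ 2))
  calc ∑ k ∈ univ.filter (· ≠ 0), 1 / (1 - torusEig L k ^ t)
      ≤ ∑ k ∈ univ.filter (· ≠ 0), g (torusSupNorm L k) :=
        sum_le_sum fun k hk => one_div_one_sub_torusEig_pow_le (mem_filter.mp hk).2 hodd
    _ ≤ ∑ l ∈ Icc 1 (L / 2), ((8 * l : ℕ) : ℝ) * g l := by
        refine sum_comp_le_sum_mul_of_card_fiber_le (fun k hk => ?_) (fun l hl => ?_)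
          (fun l hl => ?_)
        · exact mem_Icc.mpr ⟨one_le_torusSupNorm (mem_filter.mp hk).2, torusSupNorm_le k⟩
        · rw [filter_filter]
          refine (card_le_card fun k hk => ?_).trans (card_torusSupNorm_eq_le l (mem_Icc.mp hl).1)
          exact (mem_filter_univ k).mpr (mem_filter.mp hk).2.2
        · have := one_sub_exp_neg_four_mul_sq_mul_div_sq_pos (L := L) (mem_Icc.mp hl).1 hodd.pos
          exact (one_div_pos.mpr this).le
    _ = _ := by
        rw [mul_sum]
        refine sum_congr rfl fun l _ => ?_
        push_cast
        ring

/-- For odd `t ≥ 1`,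
`Σ_{k ≠ 0} 1/(1 − λ_k^t) ≤ 8 · Σ_{l=1}^{⌊L/2⌋} l/(1 − exp(−4l²t/L²))`. -/
theorem torus_sum_inv_one_sub_pow_upper_bound
    (L : ℕ) [NeZero L] (hL : 2 ≤ L) (t : ℕ) (ht : 1 ≤ t) (hodd : Odd t) :
    ∑ k ∈ Finset.univ.filter (fun k : ZMod L × ZMod L => k ≠ 0),
        1 / (1 - torusEig L k ^ t) ≤
      8 * ∑ l ∈ Finset.Icc 1 (L / 2),
        (l : ℝ) / (1 - Real.exp (-4 * (l : ℝ) ^ 2 * t / (L : ℝ) ^ 2)) :=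
  torus_sum_inv_one_sub_pow_upper_bound_general L t hodd
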